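/- Fix 0 < y_1 and x_3 < -y_1, and define g_1(y_2) = (∫_0^{y_2} ds/sqrt(R(s)))^{-1} ∫_0^{y_2} (-s^2 + ((y_1+y_2-x_3)/2)s + x_3(y_1+y_2)/4 + (y_1-y_2)^2/8)/sqrt(R(s)) ds, where sqrt(R(s)) = -sqrt(s(y_2-s)(y_1-s)). Then g_1(y_2) = (y_1/4)(x_3 + y_1/2) + O(y_2^2) as y_2 ↓ 0. -/

import Mathlib

/-!
The weight `w(s) = 1/√(s(y₂-s)(y₁-s))` on `[0, y₂]` is symmetric about `y₂/2` up to a factor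
`1 + O(y₂)`: only `y₁ - s` breaks the symmetry. Pairing `s` with `y₂ - s` therefore shows that the
first moment of `w` about `y₂/2` is `O(y₂²) ∫ w`, and the second moment is trivially at most
`y₂² ∫ w`. With `a = (y₁ + y₂ - x₃)/2` the numerator is
`-s² + a(s - y₂/2) + (y₁/4)(x₃ + y₁/2) + 3y₂²/8`, so its `w`-weighted mean is
`(y₁/4)(x₃ + y₁/2) + O(y₂²)`.
-/

open Asymptotics MeasureTheory intervalIntegral Set

theorem abs_integral_sub_midpoint_mul_le {w : ℝ → ℝ} {a b ε : ℝ} (hab : a ≤ b)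
    (hw : IntervalIntegrable w volume a b)
    (hsymm : ∀ s ∈ Ioo a b, |w (a + b - s) - w s| ≤ ε * w s) :
    |∫ s in a..b, (s - (a + b) / 2) * w s| ≤ ε * (b - a) / 4 * ∫ s in a..b, w s := by
  set m := (a + b) / 2 with hm
  have hwr : IntervalIntegrable (fun s => w (a + b - s)) volume a b := by
    simpa using (hw.comp_sub_left (a + b)).symm
  have hmoment : IntervalIntegrable (fun s => (s - m) * w s) volume a b :=
    hw.continuousOn_mul (by fun_prop)
  have hreflect : ∫ s in a..b, (s - m) * w (a + b - s) = -∫ s in a..b, (s - m) * w s := by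
    have := integral_comp_sub_left (fun t => (m - t) * w t) (a + b) (a := a) (b := b)
    rw [add_sub_cancel_left, add_sub_cancel_right] at this
    rw [← intervalIntegral.integral_neg]
    convert this using 3 with s <;> ring
  have htwice :
      2 * ∫ s in a..b, (s - m) * w s = ∫ s in a..b, (s - m) * (w s - w (a + b - s)) := by
    simp only [mul_sub]
    rw [intervalIntegral.integral_sub hmoment (hwr.continuousOn_mul (by fun_prop)), hreflect]
    ring
  have hbound : |∫ s in a..b, (s - m) * (w s - w (a + b - s))|
      ≤ ∫ s in a..b, (b - a) / 2 * (ε * w s) := by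
    refine (abs_integral_le_integral_abs hab).trans (integral_mono_on_of_le_Ioo hab ?_ ?_ ?_)
    · exact (hw.sub hwr).continuousOn_mul (by fun_prop) |>.abs
    · exact (hw.const_mul ε).const_mul _
    · intro s hs
      rw [abs_mul, abs_sub_comm (w s)]
      exact mul_le_mul (abs_le.2 ⟨by linarith [hs.1], by linarith [hs.2]⟩) (hsymm s hs)
        (abs_nonneg _) (by linarith)
  rw [intervalIntegral.integral_const_mul, intervalIntegral.integral_const_mul, ← htwice,
    abs_mul, abs_two] at hbound
  linarith

theorem abs_weighted_mean_quadratic_sub_le {w : ℝ → ℝ} {h ε a c : ℝ} (hh : 0 ≤ h)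
    (hw : IntervalIntegrable w volume 0 h) (hw0 : ∀ s ∈ Ioo 0 h, 0 ≤ w s)
    (hA : 0 < ∫ s in 0..h, w s) (hsymm : ∀ s ∈ Ioo 0 h, |w (h - s) - w s| ≤ ε * w s) :
    |(∫ s in 0..h, w s)⁻¹ * (∫ s in 0..h, (-s ^ 2 + a * s + c) * w s) - (c + a * h / 2)|
      ≤ h ^ 2 + |a| * (ε * h / 4) := by
  set A := ∫ s in 0..h, w s
  set S := ∫ s in 0..h, s ^ 2 * w s
  set E := ∫ s in 0..h, (s - h / 2) * w s
  have hsq : IntervalIntegrable (fun s => s ^ 2 * w s) volume 0 h :=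
    hw.continuousOn_mul (by fun_prop)
  have hmoment : IntervalIntegrable (fun s => (s - h / 2) * w s) volume 0 h :=
    hw.continuousOn_mul (by fun_prop)
  have hsplit : ∫ s in 0..h, (-s ^ 2 + a * s + c) * w s = a * E + (c + a * h / 2) * A - S := by
    rw [integral_congr (g := fun s => a * ((s - h / 2) * w s) + (c + a * h / 2) * w s
        - s ^ 2 * w s) fun s _ => by ring,
      integral_sub ((hmoment.const_mul a).add (hw.const_mul _)) hsq,
      integral_add (hmoment.const_mul a) (hw.const_mul _),
      intervalIntegral.integral_const_mul, intervalIntegral.integral_const_mul]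
  have hS : |S| ≤ h ^ 2 * A := by
    rw [← intervalIntegral.integral_const_mul]
    refine (abs_integral_le_integral_abs hh).trans
      (integral_mono_on_of_le_Ioo hh hsq.abs (hw.const_mul _) fun s hs => ?_)
    rw [abs_mul, abs_of_nonneg (hw0 s hs), abs_pow, abs_of_pos hs.1]
    exact mul_le_mul_of_nonneg_right (pow_le_pow_left₀ hs.1.le hs.2.le 2) (hw0 s hs)
  have hE : |E| ≤ ε * h / 4 * A := by
    simpa using abs_integral_sub_midpoint_mul_le hh hw (by simpa using hsymm)
  rw [hsplit, show A⁻¹ * (a * E + (c + a * h / 2) * A - S) - (c + a * h / 2)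
      = (a * E - S) / A by field_simp; ring, abs_div, abs_of_pos hA, div_le_iff₀ hA]
  calc |a * E - S| ≤ |S| + |a| * |E| := by
        simpa only [abs_mul, add_comm] using abs_sub (a * E) S
    _ ≤ h ^ 2 * A + |a| * (ε * h / 4 * A) := by gcongr
    _ = (h ^ 2 + |a| * (ε * h / 4)) * A := by ring

theorem abs_inv_sqrt_sub_inv_sqrt_le {p q : ℝ} (hp : 0 < p) (hq : 0 < q) :
    |(√q)⁻¹ - (√p)⁻¹| ≤ |q - p| / q * (√p)⁻¹ := by
  obtain ⟨x, hx, rfl⟩ : ∃ x, 0 < x ∧ x ^ 2 = p := ⟨√p, Real.sqrt_pos.2 hp, Real.sq_sqrt hp.le⟩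
  obtain ⟨y, hy, rfl⟩ : ∃ y, 0 < y ∧ y ^ 2 = q := ⟨√q, Real.sqrt_pos.2 hq, Real.sq_sqrt hq.le⟩
  rw [Real.sqrt_sq hx.le, Real.sqrt_sq hy.le]
  have key : y ^ 2 - x ^ 2 = (y - x) * (y + x) := by ring
  rw [key, inv_sub_inv hy.ne' hx.ne', abs_mul, abs_div, abs_sub_comm,
    abs_of_pos (by positivity : 0 < y + x), abs_of_pos (by positivity : 0 < y * x),
    div_le_iff₀ (by positivity)]
  field_simp
  nlinarith [abs_nonneg (y - x)]

/-- `-1/√R(s)` for the negative branch of `√R`, `R(s) = s(s - y₂)(s - y₁)`. -/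
noncomputable def ellipticWeight (y₁ y₂ s : ℝ) : ℝ := (√(s * (y₂ - s) * (y₁ - s)))⁻¹

section
variable {y₁ y₂ : ℝ}

theorem ellipticWeight_nonneg (s : ℝ) : 0 ≤ ellipticWeight y₁ y₂ s :=
  inv_nonneg.2 (Real.sqrt_nonneg _)

theorem ellipticWeight_pos (h : y₂ < y₁) {s : ℝ} (hs : s ∈ Ioo 0 y₂) :
    0 < ellipticWeight y₁ y₂ s :=
  inv_pos.2 <| Real.sqrt_pos.2 <| mul_pos (mul_pos hs.1 (by linarith [hs.2])) (by linarith [hs.2])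

theorem ellipticWeight_le (h0 : 0 < y₂) (h : y₂ < y₁) {s : ℝ} (hs : s ∈ Ioo 0 y₂) :
    ellipticWeight y₁ y₂ s ≤
      (√(y₂ * (y₁ - y₂)))⁻¹ * (s ^ (-(1 / 2) : ℝ) + (y₂ - s) ^ (-(1 / 2) : ℝ)) := by
  obtain ⟨hs0, hsy⟩ := hs
  have hx := Real.sqrt_pos.2 hs0
  have hy := Real.sqrt_pos.2 (sub_pos.2 hsy)
  have hz := Real.sqrt_pos.2 (by linarith : 0 < y₁ - s)
  have hsum : √y₂ ≤ √s + √(y₂ - s) := by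
    rw [Real.sqrt_le_left (by positivity)]
    nlinarith [Real.sq_sqrt hs0.le, Real.sq_sqrt (sub_pos.2 hsy).le]
  have hz' : √(y₁ - y₂) ≤ √(y₁ - s) := Real.sqrt_le_sqrt (by linarith)
  rw [ellipticWeight, Real.rpow_neg hs0.le, Real.rpow_neg (by linarith), ← Real.sqrt_eq_rpow,
    ← Real.sqrt_eq_rpow, Real.sqrt_mul (by positivity), Real.sqrt_mul (by positivity),
    Real.sqrt_mul h0.le, inv_add_inv hx.ne' hy.ne', inv_mul_eq_div, div_div, ← one_div,
    div_le_div_iff₀ (by positivity) (by positivity), one_mul]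
  calc √s * √(y₂ - s) * (√y₂ * √(y₁ - y₂))
      ≤ √s * √(y₂ - s) * ((√s + √(y₂ - s)) * √(y₁ - s)) := by gcongr
    _ = _ := by ring

theorem intervalIntegrable_ellipticWeight (h0 : 0 < y₂) (h : y₂ < y₁) :
    IntervalIntegrable (ellipticWeight y₁ y₂) volume 0 y₂ := by
  have hrpow : IntervalIntegrable (fun s => s ^ (-(1 / 2) : ℝ)) volume 0 y₂ :=
    intervalIntegrable_rpow' (by norm_num)
  have hrpow' : IntervalIntegrable (fun s => (y₂ - s) ^ (-(1 / 2) : ℝ)) volume 0 y₂ := by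
    simpa using (hrpow.comp_sub_left y₂).symm
  refine ((hrpow.add hrpow').const_mul (√(y₂ * (y₁ - y₂)))⁻¹).mono_fun'
    (by unfold ellipticWeight; fun_prop) ?_
  rw [uIoc_of_le h0.le, Measure.restrict_congr_set Ioo_ae_eq_Ioc.symm]
  refine (ae_restrict_iff' measurableSet_Ioo).2 (ae_of_all _ fun s hs => ?_)
  simpa only [Real.norm_of_nonneg (ellipticWeight_nonneg s)] using ellipticWeight_le h0 h hs

theorem abs_ellipticWeight_reflect_sub_le (h : y₂ < y₁) {s : ℝ} (hs : s ∈ Ioo 0 y₂) :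
    |ellipticWeight y₁ y₂ (y₂ - s) - ellipticWeight y₁ y₂ s|
      ≤ y₂ / (y₁ - y₂) * ellipticWeight y₁ y₂ s := by
  obtain ⟨hs0, hsy⟩ := hs
  have hst : 0 < s * (y₂ - s) := mul_pos hs0 (by linarith)
  refine (abs_inv_sqrt_sub_inv_sqrt_le (mul_pos hst (by linarith))
    (mul_pos (mul_pos (by linarith) (by linarith)) (by linarith))).trans
    (mul_le_mul_of_nonneg_right ?_ (ellipticWeight_nonneg s))
  rw [div_le_div_iff₀ (by nlinarith) (by linarith),
    show (y₂ - s) * (y₂ - (y₂ - s)) * (y₁ - (y₂ - s)) - s * (y₂ - s) * (y₁ - s)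
      = s * (y₂ - s) * (2 * s - y₂) by ring, abs_mul, abs_of_pos hst]
  have : |2 * s - y₂| ≤ y₂ := abs_le.2 ⟨by linarith, by linarith⟩
  have : 0 ≤ y₁ - y₂ := by linarith
  calc s * (y₂ - s) * |2 * s - y₂| * (y₁ - y₂) ≤ s * (y₂ - s) * y₂ * (y₁ - y₂) := by gcongr
    _ ≤ y₂ * ((y₂ - s) * (y₂ - (y₂ - s)) * (y₁ - (y₂ - s))) := by
        nlinarith [mul_pos (mul_pos hst hs0) (hs0.trans hsy)]
end

theorem abs_ellipticMean_sub_le {y₁ x₃ y₂ : ℝ} (h0 : 0 < y₂) (h2 : y₂ ≤ y₁ / 2) :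
    |(∫ s in (0:ℝ)..y₂, 1 / (-(√(s * (y₂ - s) * (y₁ - s)))))⁻¹ *
      (∫ s in (0:ℝ)..y₂,
        (-s ^ 2 + ((y₁ + y₂ - x₃) / 2) * s + x₃ * (y₁ + y₂) / 4 + (y₁ - y₂) ^ 2 / 8) /
          (-(√(s * (y₂ - s) * (y₁ - s))))) - (y₁ / 4) * (x₃ + y₁ / 2)|
      ≤ (11 / 8 + (y₁ + |x₃|) / (2 * y₁)) * y₂ ^ 2 := by
  have hy1 : 0 < y₁ := by linarith
  have hlt : y₂ < y₁ := by linarith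
  set a := (y₁ + y₂ - x₃) / 2 with ha_def
  set c := x₃ * (y₁ + y₂) / 4 + (y₁ - y₂) ^ 2 / 8
  have hI1 : ∫ s in (0:ℝ)..y₂, 1 / (-(√(s * (y₂ - s) * (y₁ - s))))
      = -∫ s in (0:ℝ)..y₂, ellipticWeight y₁ y₂ s := by
    rw [← intervalIntegral.integral_neg]
    simp only [ellipticWeight, one_div, inv_neg]
  have hI2 : ∫ s in (0:ℝ)..y₂, (-s ^ 2 + a * s + x₃ * (y₁ + y₂) / 4 + (y₁ - y₂) ^ 2 / 8) /
        (-(√(s * (y₂ - s) * (y₁ - s))))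
      = -∫ s in (0:ℝ)..y₂, (-s ^ 2 + a * s + c) * ellipticWeight y₁ y₂ s := by
    rw [← intervalIntegral.integral_neg]
    congr 1 with s
    rw [ellipticWeight, div_neg, div_eq_mul_inv]
    ring
  have hmean := abs_weighted_mean_quadratic_sub_le (a := a) (c := c) h0.le
    (intervalIntegrable_ellipticWeight h0 hlt) (fun s _ => ellipticWeight_nonneg s)
    (intervalIntegral_pos_of_pos_on (intervalIntegrable_ellipticWeight h0 hlt)
      (fun s hs => ellipticWeight_pos hlt hs) h0)
    (fun s hs => abs_ellipticWeight_reflect_sub_le hlt hs)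
  have hcenter : c + a * y₂ / 2 = y₁ / 4 * (x₃ + y₁ / 2) + 3 / 8 * y₂ ^ 2 := by ring
  have ha : |a| ≤ y₁ + |x₃| := by
    rw [abs_le]; constructor <;> cases abs_cases x₃ <;> linarith
  have hε : y₂ / (y₁ - y₂) ≤ 2 * y₂ / y₁ := by
    rw [div_le_div_iff₀ (by linarith) hy1]; nlinarith
  have hasym : |a| * (y₂ / (y₁ - y₂) * y₂ / 4) ≤ (y₁ + |x₃|) / (2 * y₁) * y₂ ^ 2 :=
    calc |a| * (y₂ / (y₁ - y₂) * y₂ / 4) ≤ (y₁ + |x₃|) * (2 * y₂ / y₁ * y₂ / 4) := by gcongr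
      _ = (y₁ + |x₃|) / (2 * y₁) * y₂ ^ 2 := by field_simp; ring
  rw [hcenter, abs_le] at hmean
  rw [hI1, hI2, inv_neg, neg_mul_neg, abs_le]
  constructor <;> nlinarith [hmean.1, hmean.2]

theorem stmt_8_general (y₁ x₃ : ℝ) (hy1 : 0 < y₁)
    (g₁ : ℝ → ℝ)
    (hg1 : ∀ y₂ ∈ Set.Ioo (0:ℝ) y₁, g₁ y₂ =
      (∫ s in (0:ℝ)..y₂, 1 / (-(Real.sqrt (s * (y₂ - s) * (y₁ - s)))))⁻¹ *
      ∫ s in (0:ℝ)..y₂,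
        (-s ^ 2 + ((y₁ + y₂ - x₃) / 2) * s + x₃ * (y₁ + y₂) / 4 + (y₁ - y₂) ^ 2 / 8) /
          (-(Real.sqrt (s * (y₂ - s) * (y₁ - s))))) :
    (fun y₂ => g₁ y₂ - (y₁ / 4) * (x₃ + y₁ / 2)) =O[nhdsWithin 0 (Set.Ioi 0)]
      fun y₂ => y₂ ^ 2 := by
  refine IsBigO.of_bound (11 / 8 + (y₁ + |x₃|) / (2 * y₁)) ?_
  filter_upwards [Ioo_mem_nhdsGT (half_pos hy1)] with y₂ ⟨h0, h2⟩
  rw [hg1 y₂ ⟨h0, by linarith⟩, Real.norm_eq_abs, Real.norm_eq_abs, abs_of_pos (pow_pos h0 2)]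
  exact abs_ellipticMean_sub_le h0 h2.le

theorem stmt_8 (y₁ x₃ : ℝ) (hy1 : 0 < y₁) (hx3 : x₃ < -y₁)
    (g₁ : ℝ → ℝ)
    (hg1 : ∀ y₂ ∈ Set.Ioo (0:ℝ) y₁, g₁ y₂ =
      (∫ s in (0:ℝ)..y₂, 1 / (-(Real.sqrt (s * (y₂ - s) * (y₁ - s)))))⁻¹ *
      ∫ s in (0:ℝ)..y₂,
        (-s ^ 2 + ((y₁ + y₂ - x₃) / 2) * s + x₃ * (y₁ + y₂) / 4 + (y₁ - y₂) ^ 2 / 8) /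
          (-(Real.sqrt (s * (y₂ - s) * (y₁ - s))))) :
    (fun y₂ => g₁ y₂ - (y₁ / 4) * (x₃ + y₁ / 2)) =O[nhdsWithin 0 (Set.Ioi 0)]
      fun y₂ => y₂ ^ 2 :=
  stmt_8_general y₁ x₃ hy1 g₁ hg1
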